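/- Let F be an almost superadditive process and suppose F is nonnegative. Define f̄(ω) = limsup_n (1/|S_n|) F_{S_n}(ω). Then for any fixed integer m ≥ 1, f̄(ω) = limsup_{k→∞} (1/|S_{km}|) F_{S_{km}}(ω); similarly for the liminf. -/

import Mathlib

/-!
Nonnegativity and almost superadditivity make `n ↦ F_{S_n}` almost monotone: `S_n` grows into
`S_N` by enlarging one coordinate at a time, each step adding a slab on which `F ≥ 0`, at the
price of `O(d N^{d-1})` boundary points, so `F_{S_n} ≤ F_{S_N} + 4d² A N^{d-1}` for `n ≤ N`.
Every `n` lies between consecutive multiples `km ≤ n < (k+1)m` of `m`, whose ratios to `n` tend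
to `1`, and the boundary error is `o(n^d)`. Hence `|S_n|⁻¹ F_{S_n}` is bounded above by the
normalised value at `(k+1)m` and below by the one at `km`, up to factors tending to `1` and
additive terms tending to `0`, which pins its `limsup` and `liminf` to those along multiples of `m`.
-/

open MeasureTheory Filter

/-- Adjacency in `ℤ₊^d`: `x ∼ y` iff their `l¹`-distance is 1. -/
def adjN {d : ℕ} (x y : Fin d → ℕ) : Prop := (∑ i, ((x i : ℤ) - (y i : ℤ)).natAbs) = 1

/-- A box in `ℤ₊^d`: a product of intervals `[aᵢ, bᵢ)` with `aᵢ < bᵢ`. -/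
def IsBoxN {d : ℕ} (B : Finset (Fin d → ℕ)) : Prop :=
  ∃ a b : Fin d → ℕ, (∀ i, a i < b i) ∧ B = Fintype.piFinset fun i => Finset.Ico (a i) (b i)

/-- The hypercube `S_n = [0,n)^d ∩ ℤ₊^d`. -/
def cubeN (d n : ℕ) : Finset (Fin d → ℕ) := Fintype.piFinset fun _ => Finset.range n

/-- The inner boundary `∂B = {x ∈ B : ∃ y ∉ B, x ∼ y}`. -/
noncomputable def ibdN {d : ℕ} (B : Finset (Fin d → ℕ)) : Finset (Fin d → ℕ) :=
  @Finset.filter _ (fun x => ∃ y, y ∉ B ∧ adjN x y) (Classical.decPred _) B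

/-- An almost superadditive random process `F = (F_B)` indexed by boxes of `ℤ₊^d`,
relative to a measure-preserving semigroup `(τ_u)` and with defect random variable `A`. -/
structure AlmostSuperadditive {d : ℕ} {Ω : Type*} [MeasurableSpace Ω] (μ : Measure Ω)
    (τ : (Fin d → ℕ) → Ω → Ω) (F : Finset (Fin d → ℕ) → Ω → ℝ) (A : Ω → ℝ) : Prop where
  meas : ∀ u, MeasurePreserving (τ u) μ μ
  semigroup : ∀ u v, τ (u + v) = τ u ∘ τ v
  int : ∀ B, IsBoxN B → Integrable (F B) μ
  shift : ∀ (u : Fin d → ℕ) (B : Finset (Fin d → ℕ)), IsBoxN B →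
    F (B.image fun x => u + x) = (F B) ∘ (τ u)
  Anonneg : ∀ ω, 0 ≤ A ω
  Aint : Integrable A μ
  superadd : ∀ (k : ℕ) (Bs : Fin k → Finset (Fin d → ℕ)),
    (∀ i, IsBoxN (Bs i)) →
    (∀ i j, i ≠ j → Disjoint (Bs i) (Bs j)) →
    IsBoxN (Finset.univ.biUnion Bs) →
    ∀ ω, (∑ i, F (Bs i) ω) - A ω * (∑ i, ((ibdN (Bs i)).card : ℝ))
      ≤ F (Finset.univ.biUnion Bs) ω

/-- The normalized expectations `n ↦ |S_n|⁻¹ E[F_{S_n}]`. -/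
noncomputable def avgSeq {d : ℕ} {Ω : Type*} [MeasurableSpace Ω] (μ : Measure Ω)
    (F : Finset (Fin d → ℕ) → Ω → ℝ) (n : ℕ) : ℝ :=
  (∫ ω, F (cubeN d n) ω ∂μ) / (n : ℝ) ^ d

/-- The time constant `γ̃(F) = limsup_n |S_n|⁻¹ E[F_{S_n}]`. -/
noncomputable def timeConst {d : ℕ} {Ω : Type*} [MeasurableSpace Ω] (μ : Measure Ω)
    (F : Finset (Fin d → ℕ) → Ω → ℝ) : ℝ :=
  limsup (avgSeq μ F) atTop

open Topology

section MulAdd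

variable {ι : Type*} {l : Filter ι} [l.NeBot] {x y ρ ε : ι → ℝ}

lemma limsup_le_limsup_of_le_mul_add (hρ : Tendsto ρ l (𝓝 1)) (hε : Tendsto ε l (𝓝 0))
    (hy₀ : 0 ≤ᶠ[l] y) (hy : IsBoundedUnder (· ≤ ·) l y) (hx : IsBoundedUnder (· ≥ ·) l x)
    (h : ∀ᶠ i in l, x i ≤ ρ i * y i + ε i) : limsup x l ≤ limsup y l := by
  have hρ₀ : 0 ≤ᶠ[l] ρ := hρ.eventually_const_le zero_lt_one |>.mono fun _ h => h
  have hρy : IsBoundedUnder (· ≤ ·) l (ρ * y) :=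
    isBoundedUnder_le_mul_of_nonneg hρ₀.frequently hρ.isBoundedUnder_le hy₀ hy
  have hρy₀ : IsBoundedUnder (· ≥ ·) l (ρ * y) :=
    isBoundedUnder_of_eventually_ge (a := 0) ((hρ₀.and hy₀).mono fun _ h => mul_nonneg h.1 h.2)
  calc limsup x l ≤ limsup (ρ * y + ε) l :=
        limsup_le_limsup h hx.isCoboundedUnder_flip (isBoundedUnder_le_add hρy hε.isBoundedUnder_le)
    _ ≤ limsup (ρ * y) l + limsup ε l :=
        limsup_add_le hρy₀ hρy hε.isBoundedUnder_ge.isCoboundedUnder_flip hε.isBoundedUnder_le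
    _ ≤ limsup ρ l * limsup y l + limsup ε l := by
        gcongr; exact limsup_mul_le hρ₀.frequently hρ.isBoundedUnder_le hy₀ hy
    _ = limsup y l := by rw [hρ.limsup_eq, hε.limsup_eq]; ring

lemma liminf_le_liminf_of_le_mul_add (hρ : Tendsto ρ l (𝓝 1)) (hε : Tendsto ε l (𝓝 0))
    (hy₀ : 0 ≤ᶠ[l] y) (hy : IsBoundedUnder (· ≤ ·) l y) (hx : IsBoundedUnder (· ≥ ·) l x)
    (h : ∀ᶠ i in l, x i ≤ ρ i * y i + ε i) : liminf x l ≤ liminf y l := by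
  have hρ₀ : 0 ≤ᶠ[l] ρ := hρ.eventually_const_le zero_lt_one |>.mono fun _ h => h
  have hρy : IsBoundedUnder (· ≤ ·) l (ρ * y) :=
    isBoundedUnder_le_mul_of_nonneg hρ₀.frequently hρ.isBoundedUnder_le hy₀ hy
  have hρy₀ : IsBoundedUnder (· ≥ ·) l (ρ * y) :=
    isBoundedUnder_of_eventually_ge (a := 0) ((hρ₀.and hy₀).mono fun _ h => mul_nonneg h.1 h.2)
  calc liminf x l ≤ liminf (ε + ρ * y) l :=
        liminf_le_liminf (h.mono fun _ h => h.trans_eq (add_comm _ _)) hx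
          (isBoundedUnder_le_add hε.isBoundedUnder_le hρy).isCoboundedUnder_flip
    _ ≤ limsup ε l + liminf (ρ * y) l :=
        liminf_add_le hε.isBoundedUnder_ge hε.isBoundedUnder_le hρy₀ hρy.isCoboundedUnder_flip
    _ ≤ limsup ε l + limsup ρ l * liminf y l := by
        gcongr; exact liminf_mul_le hρ₀ hρ.isBoundedUnder_le hy₀ hy.isCoboundedUnder_flip
    _ = liminf y l := by rw [hρ.limsup_eq, hε.limsup_eq]; ring

end MulAdd

lemma limsup_comp_le_and_liminf_le_liminf_comp {ι κ : Type*} {l : Filter ι} {l' : Filter κ}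
    [l'.NeBot] {u : ι → ℝ} {φ : κ → ι} (hφ : Tendsto φ l' l) (hu : IsBoundedUnder (· ≤ ·) l u)
    (hu' : IsBoundedUnder (· ≥ ·) l u) :
    limsup (u ∘ φ) l' ≤ limsup u l ∧ liminf u l ≤ liminf (u ∘ φ) l' :=
  ⟨hφ.limsup_comp_le_limsup (hφ.isBoundedUnder_comp hu').isCoboundedUnder_flip hu,
    hφ.liminf_le_liminf_comp (hφ.isBoundedUnder_comp hu).isCoboundedUnder_flip hu'⟩

section AlmostMonotone

lemma tendsto_natCast_div_natCast_of_le_add {f : ℕ → ℕ} {c : ℕ} (h₁ : ∀ n, f n ≤ n + c)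
    (h₂ : ∀ n, n ≤ f n + c) : Tendsto (fun n => (f n : ℝ) / n) atTop (𝓝 1) := by
  have hc := tendsto_const_div_atTop_nhds_zero_nat (c : ℝ)
  refine tendsto_of_tendsto_of_tendsto_of_le_of_le' (by simpa using hc.const_sub 1)
    (by simpa using hc.const_add 1) ?_ ?_ <;>
  filter_upwards [eventually_gt_atTop 0] with n hn <;>
  have hn' : (0 : ℝ) < n := by exact_mod_cast hn
  · rw [le_div_iff₀ hn', sub_mul, div_mul_cancel₀ _ hn'.ne', one_mul, sub_le_iff_le_add]
    exact_mod_cast h₂ n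
  · rw [div_le_iff₀ hn', add_mul, div_mul_cancel₀ _ hn'.ne', one_mul]
    exact_mod_cast h₁ n

lemma tendsto_natCast_mul_pow_pred_div_pow (d : ℕ) :
    Tendsto (fun n : ℕ => d * (n : ℝ) ^ (d - 1) / (n : ℝ) ^ d) atTop (𝓝 0) := by
  rcases d with _ | d
  · simp
  refine (tendsto_const_div_atTop_nhds_zero_nat ((d + 1 : ℕ) : ℝ)).congr' ?_
  filter_upwards [eventually_gt_atTop 0] with n hn
  have hn' : (n : ℝ) ≠ 0 := by exact_mod_cast hn.ne'
  simp only [Nat.add_sub_cancel]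
  field_simp
  ring

lemma div_pow_le_mul_add_of_le_add {a b d : ℕ} {x y z : ℝ} (ha : 0 < a) (hb : 0 < b)
    (h : x ≤ y + z) :
    x / (a : ℝ) ^ d
      ≤ ((b : ℝ) / a) ^ d * (y / (b : ℝ) ^ d) + ((b : ℝ) / a) ^ d * (z / (b : ℝ) ^ d) := by
  have ha' : (a : ℝ) ≠ 0 := by exact_mod_cast ha.ne'
  have hb' : (b : ℝ) ≠ 0 := by exact_mod_cast hb.ne'
  rw [← mul_add, ← add_div, div_pow, div_mul_div_comm, mul_comm,
    mul_div_mul_right _ _ (pow_ne_zero d hb')]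
  gcongr

variable {g e : ℕ → ℝ} {d : ℕ}

lemma limsup_comp_le_and_liminf_comp_le_of_le_add (hmono : ∀ a b, 0 < a → a ≤ b → g a ≤ g b + e b)
    (he : Tendsto (fun n => e n / (n : ℝ) ^ d) atTop (𝓝 0)) (hg₀ : ∀ n, 0 < n → 0 ≤ g n)
    (hbd : IsBoundedUnder (· ≤ ·) atTop fun n => g n / (n : ℝ) ^ d)
    {α β : ℕ → ℕ} (hαβ : ∀ᶠ n in atTop, 0 < α n ∧ α n ≤ β n) (hβ : Tendsto β atTop atTop)
    (hratio : Tendsto (fun n => (β n : ℝ) / α n) atTop (𝓝 1)) :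
    limsup (fun n => g (α n) / (α n : ℝ) ^ d) atTop
        ≤ limsup (fun n => g (β n) / (β n : ℝ) ^ d) atTop ∧
      liminf (fun n => g (α n) / (α n : ℝ) ^ d) atTop
        ≤ liminf (fun n => g (β n) / (β n : ℝ) ^ d) atTop := by
  have hρ : Tendsto (fun n => ((β n : ℝ) / α n) ^ d) atTop (𝓝 1) := by
    simpa using hratio.pow d
  have hε : Tendsto (fun n => ((β n : ℝ) / α n) ^ d * (e (β n) / (β n : ℝ) ^ d)) atTop (𝓝 0) := by
    simpa using hρ.mul (he.comp hβ)
  have hle : ∀ᶠ n in atTop, g (α n) / (α n : ℝ) ^ d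
      ≤ ((β n : ℝ) / α n) ^ d * (g (β n) / (β n : ℝ) ^ d)
        + ((β n : ℝ) / α n) ^ d * (e (β n) / (β n : ℝ) ^ d) :=
    hαβ.mono fun n h => div_pow_le_mul_add_of_le_add h.1 (h.1.trans_le h.2) (hmono _ _ h.1 h.2)
  have hy₀ : 0 ≤ᶠ[atTop] fun n => g (β n) / (β n : ℝ) ^ d := hαβ.mono fun n h =>
    div_nonneg (hg₀ _ (h.1.trans_le h.2)) (by positivity)
  have hx : IsBoundedUnder (· ≥ ·) atTop fun n => g (α n) / (α n : ℝ) ^ d :=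
    isBoundedUnder_of_eventually_ge (a := 0) <| hαβ.mono fun n h =>
      div_nonneg (hg₀ _ h.1) (by positivity)
  exact ⟨limsup_le_limsup_of_le_mul_add hρ hε hy₀ (hβ.isBoundedUnder_comp hbd) hx hle,
    liminf_le_liminf_of_le_mul_add hρ hε hy₀ (hβ.isBoundedUnder_comp hbd) hx hle⟩

theorem limsup_comp_mul_eq_and_liminf_comp_mul_eq_of_le_add
    (hmono : ∀ a b, 0 < a → a ≤ b → g a ≤ g b + e b)
    (he : Tendsto (fun n => e n / (n : ℝ) ^ d) atTop (𝓝 0)) (hg₀ : ∀ n, 0 < n → 0 ≤ g n)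
    (hbd : IsBoundedUnder (· ≤ ·) atTop fun n => g n / (n : ℝ) ^ d) {m : ℕ} (hm : 0 < m) :
    limsup (fun k => g (k * m) / ((k * m : ℕ) : ℝ) ^ d) atTop
        = limsup (fun n => g n / (n : ℝ) ^ d) atTop ∧
      liminf (fun k => g (k * m) / ((k * m : ℕ) : ℝ) ^ d) atTop
        = liminf (fun n => g n / (n : ℝ) ^ d) atTop := by
  set u : ℕ → ℝ := fun n => g n / (n : ℝ) ^ d
  have hu : IsBoundedUnder (· ≥ ·) atTop u := isBoundedUnder_of_eventually_ge (a := 0) <|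
    (eventually_gt_atTop 0).mono fun n hn => div_nonneg (hg₀ n hn) (by positivity)
  have hmul : Tendsto (· * m) atTop atTop :=
    tendsto_atTop_mono (fun k => Nat.le_mul_of_pos_right k hm) tendsto_id
  have hdiv : Tendsto (· / m) atTop atTop := Nat.tendsto_div_const_atTop hm.ne'
  have hsucc : Tendsto (fun n => n / m + 1) atTop atTop := (tendsto_add_atTop_nat 1).comp hdiv
  have hlt (n : ℕ) : n < n / m * m + m := Nat.lt_div_mul_add hm
  have hle (n : ℕ) : n / m * m ≤ n := Nat.div_mul_le_self n m
  have hup := limsup_comp_le_and_liminf_comp_le_of_le_add hmono he hg₀ hbd (α := id)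
    (β := fun n => (n / m + 1) * m)
    ((eventually_gt_atTop 0).mono fun n hn => ⟨hn, by rw [add_one_mul]; exact (hlt n).le⟩)
    (tendsto_atTop_mono (fun n => by rw [add_one_mul]; exact (hlt n).le) tendsto_id)
    (tendsto_natCast_div_natCast_of_le_add (c := m) (fun n => by rw [add_one_mul]; linarith [hle n])
      (fun n => by rw [add_one_mul]; linarith [hlt n]))
  have hlow := limsup_comp_le_and_liminf_comp_le_of_le_add hmono he hg₀ hbd
    (α := fun n => n / m * m) (β := id)
    ((eventually_ge_atTop m).mono fun n hn => ⟨Nat.mul_pos (Nat.div_pos hn hm) hm, hle n⟩)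
    tendsto_id
    (by simpa using (tendsto_natCast_div_natCast_of_le_add (c := m)
      (fun n => (hle n).trans (n.le_add_right m)) (fun n => (hlt n).le)).inv₀ one_ne_zero)
  obtain ⟨hsup, hinf⟩ := limsup_comp_le_and_liminf_le_liminf_comp hmul hbd hu
  have hv := limsup_comp_le_and_liminf_le_liminf_comp (u := u ∘ (· * m)) hsucc
    (hmul.isBoundedUnder_comp hbd) (hmul.isBoundedUnder_comp hu)
  have hv' := limsup_comp_le_and_liminf_le_liminf_comp (u := u ∘ (· * m)) hdiv
    (hmul.isBoundedUnder_comp hbd) (hmul.isBoundedUnder_comp hu)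
  exact ⟨hsup.antisymm (hup.1.trans hv.1), (hv'.2.trans hlow.2).antisymm hinf⟩

end AlmostMonotone

def boxN {d : ℕ} (a b : Fin d → ℕ) : Finset (Fin d → ℕ) :=
  Fintype.piFinset fun i => Finset.Ico (a i) (b i)

section Boxes

variable {d : ℕ}

lemma mem_boxN {a b x : Fin d → ℕ} : x ∈ boxN a b ↔ ∀ i, a i ≤ x i ∧ x i < b i := by
  simp [boxN]

lemma cubeN_eq_boxN (n : ℕ) : cubeN d n = boxN 0 fun _ => n := by
  ext x
  simp [cubeN, mem_boxN]

lemma isBoxN_boxN {a b : Fin d → ℕ} (h : ∀ i, a i < b i) : IsBoxN (boxN a b) := ⟨a, b, h, rfl⟩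

lemma isBoxN_cubeN {n : ℕ} (hn : 0 < n) : IsBoxN (cubeN d n) := by
  rw [cubeN_eq_boxN]
  exact isBoxN_boxN fun _ => hn

lemma adjN.exists_forall_ne_eq {x y : Fin d → ℕ} (h : adjN x y) :
    ∃ i, ((x i : ℤ) - y i).natAbs = 1 ∧ ∀ j ≠ i, x j = y j := by
  obtain ⟨i, -, hi⟩ := Finset.exists_ne_zero_of_sum_ne_zero (h.trans_ne one_ne_zero)
  rw [adjN, ← Finset.add_sum_erase _ _ (Finset.mem_univ i)] at h
  have hrest : ∀ j ∈ Finset.univ.erase i, ((x j : ℤ) - y j).natAbs = 0 := by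
    rw [← Finset.sum_eq_zero_iff]
    omega
  refine ⟨i, by omega, fun j hj => ?_⟩
  have := hrest j (Finset.mem_erase.2 ⟨hj, Finset.mem_univ j⟩)
  omega

lemma exists_eq_of_mem_ibdN_boxN {a b x : Fin d → ℕ} (hx : x ∈ ibdN (boxN a b)) :
    ∃ i, x i = a i ∨ x i = b i - 1 := by
  classical
  obtain ⟨hxB, y, hyB, hadj⟩ := Finset.mem_filter.1 hx
  obtain ⟨i, hi, hne⟩ := hadj.exists_forall_ne_eq
  rw [mem_boxN] at hxB hyB
  refine ⟨i, ?_⟩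
  have hyi : ¬(a i ≤ y i ∧ y i < b i) := fun hyi =>
    hyB fun j => if hji : j = i then hji ▸ hyi else hne j hji ▸ hxB j
  have := hxB i
  omega

lemma card_filter_boxN_le {a b : Fin d → ℕ} {N : ℕ} (hb : ∀ i, b i ≤ N) (i : Fin d) (c : ℕ) :
    ((boxN a b).filter (· i = c)).card ≤ N ^ (d - 1) := by
  have hsub : (boxN a b).filter (· i = c) ⊆
      Fintype.piFinset (Function.update (fun _ => Finset.range N) i {c}) := by
    intro x hx
    obtain ⟨hxB, rfl⟩ := Finset.mem_filter.1 hx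
    refine Fintype.mem_piFinset.2 fun j => ?_
    rcases eq_or_ne j i with rfl | hji
    · simp
    · simpa [hji] using ((mem_boxN.1 hxB j).2.trans_le (hb j))
  refine (Finset.card_le_card hsub).trans_eq ?_
  rw [Fintype.card_piFinset, ← Finset.mul_prod_erase _ _ (Finset.mem_univ i)]
  rw [Finset.prod_congr rfl fun j hj => by rw [Function.update_of_ne (Finset.ne_of_mem_erase hj)]]
  simp [Finset.card_erase_of_mem]

lemma card_ibdN_boxN_le {a b : Fin d → ℕ} {N : ℕ} (hb : ∀ i, b i ≤ N) :
    (ibdN (boxN a b)).card ≤ 2 * d * N ^ (d - 1) := by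
  classical
  have hsub : ibdN (boxN a b) ⊆ Finset.univ.biUnion fun i =>
      (boxN a b).filter (· i = a i) ∪ (boxN a b).filter (· i = b i - 1) := by
    intro x hx
    obtain ⟨i, hi⟩ := exists_eq_of_mem_ibdN_boxN hx
    have hxB : x ∈ boxN a b := Finset.filter_subset _ _ hx
    simp only [Finset.mem_biUnion, Finset.mem_univ, true_and, Finset.mem_union,
      Finset.mem_filter]
    exact ⟨i, hi.imp (⟨hxB, ·⟩) (⟨hxB, ·⟩)⟩
  calc (ibdN (boxN a b)).card ≤ _ := Finset.card_le_card hsub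
    _ ≤ Finset.univ.card * (N ^ (d - 1) + N ^ (d - 1)) :=
        Finset.card_biUnion_le_card_mul _ _ _ fun i _ => (Finset.card_union_le _ _).trans
          (add_le_add (card_filter_boxN_le hb i _) (card_filter_boxN_le hb i _))
    _ = 2 * d * N ^ (d - 1) := by rw [Finset.card_univ, Fintype.card_fin]; ring

open Function in
lemma boxN_update_union {a b : Fin d → ℕ} {i : Fin d} {c : ℕ} (hac : a i ≤ c) (hcb : c ≤ b i) :
    boxN a (update b i c) ∪ boxN (update a i c) b = boxN a b := by
  ext x
  simp only [Finset.mem_union, mem_boxN]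
  constructor
  · rintro (h | h) j <;> rcases eq_or_ne j i with rfl | hj <;> have := h j <;> simp_all <;> omega
  · intro h
    by_cases hxi : x i < c
    · left; intro j; rcases eq_or_ne j i with rfl | hj <;> simp_all
    · right; intro j; rcases eq_or_ne j i with rfl | hj <;> have := h j <;> simp_all

open Function in
lemma disjoint_boxN_update (a b : Fin d → ℕ) (i : Fin d) (c : ℕ) :
    Disjoint (boxN a (update b i c)) (boxN (update a i c) b) := by
  refine Finset.disjoint_left.2 fun x hx hx' => ?_
  have h := (mem_boxN.1 hx i).2
  have h' := (mem_boxN.1 hx' i).1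
  simp only [update_self] at h h'
  omega

end Boxes

def partialCubeN (d n N i : ℕ) : Finset (Fin d → ℕ) :=
  boxN 0 fun j => if (j : ℕ) < i then N else n

section PartialCubes
variable {d n N : ℕ}
open Function

lemma partialCubeN_zero : partialCubeN d n N 0 = cubeN d n := by
  simp [partialCubeN, cubeN_eq_boxN]

lemma partialCubeN_self : partialCubeN d n N d = cubeN d N := by
  simp [partialCubeN, cubeN_eq_boxN]

lemma isBoxN_partialCubeN (hn : 0 < n) (hnN : n ≤ N) (i : ℕ) : IsBoxN (partialCubeN d n N i) :=
  isBoxN_boxN fun j => by split_ifs <;> simp <;> omega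

lemma partialCubeN_eq_boxN_update {i : ℕ} (hi : i < d) : partialCubeN d n N i =
    boxN 0 (update (fun j : Fin d => if (j : ℕ) < i + 1 then N else n) ⟨i, hi⟩ n) := by
  rw [partialCubeN]
  congr 1
  ext j
  rcases eq_or_ne j ⟨i, hi⟩ with rfl | hj
  · simp
  · have : (j : ℕ) ≠ i := fun h => hj (Fin.ext h)
    simp only [update_of_ne hj]
    split_ifs <;> omega

end PartialCubes

section AlmostSuperadditive

variable {d : ℕ} {Ω : Type*} [MeasurableSpace Ω] {μ : Measure Ω} {τ : (Fin d → ℕ) → Ω → Ω}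
  {F : Finset (Fin d → ℕ) → Ω → ℝ} {A : Ω → ℝ}

lemma AlmostSuperadditive.add_sub_le_union (hF : AlmostSuperadditive μ τ F A)
    {B B' : Finset (Fin d → ℕ)} (hB : IsBoxN B)
    (hB' : IsBoxN B') (hdisj : Disjoint B B') (hU : IsBoxN (B ∪ B')) (ω : Ω) :
    F B ω + F B' ω - A ω * ((ibdN B).card + (ibdN B').card) ≤ F (B ∪ B') ω := by
  have hU' : Finset.univ.biUnion ![B, B'] = B ∪ B' := by ext; simp [Fin.exists_fin_two]
  have := hF.superadd 2 ![B, B'] (Fin.forall_fin_two.2 ⟨hB, hB'⟩)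
    (by simp [Fin.forall_fin_two, hdisj, hdisj.symm]) (hU' ▸ hU) ω
  simpa [Fin.sum_univ_two, hU'] using this

lemma AlmostSuperadditive.sub_le_partialCubeN_succ (hF : AlmostSuperadditive μ τ F A)
    (hpos : ∀ B, IsBoxN B → ∀ ω, 0 ≤ F B ω) {n N i : ℕ} (hn : 0 < n) (hnN : n < N) (hi : i < d)
    (ω : Ω) :
    F (partialCubeN d n N i) ω - 4 * d * A ω * N ^ (d - 1) ≤ F (partialCubeN d n N (i + 1)) ω := by
  set b : Fin d → ℕ := fun j => if (j : ℕ) < i + 1 then N else n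
  have hbN : ∀ j, b j ≤ N := fun j => by simp only [b]; split_ifs <;> omega
  set slab := boxN (Function.update 0 ⟨i, hi⟩ n) b
  have hslab : IsBoxN slab := isBoxN_boxN fun j => by
    rcases eq_or_ne j ⟨i, hi⟩ with rfl | hj
    · simp [b, hnN]
    · simp only [Function.update_of_ne hj, b]; split_ifs <;> simp <;> omega
  have hsplit : partialCubeN d n N i ∪ slab = partialCubeN d n N (i + 1) := by
    rw [partialCubeN_eq_boxN_update hi]
    exact boxN_update_union (by simp) (by simpa using hnN.le)
  have hsup := hF.add_sub_le_union (isBoxN_partialCubeN hn hnN.le i) hslab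
    (partialCubeN_eq_boxN_update hi ▸ disjoint_boxN_update _ _ _ _)
    (hsplit ▸ isBoxN_partialCubeN hn hnN.le (i + 1)) ω
  rw [hsplit] at hsup
  have hbd₁ : ((ibdN (partialCubeN d n N i)).card : ℝ) ≤ 2 * d * N ^ (d - 1) := by
    exact_mod_cast card_ibdN_boxN_le fun j => show (if (j : ℕ) < i then N else n) ≤ N by
      split_ifs <;> omega
  have hbd₂ : ((ibdN slab).card : ℝ) ≤ 2 * d * N ^ (d - 1) := by
    exact_mod_cast card_ibdN_boxN_le hbN
  have hA := mul_le_mul_of_nonneg_left (add_le_add hbd₁ hbd₂) (hF.Anonneg ω)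
  linarith [hpos slab hslab ω]

lemma AlmostSuperadditive.le_cubeN_add (hF : AlmostSuperadditive μ τ F A)
    (hpos : ∀ B, IsBoxN B → ∀ ω, 0 ≤ F B ω) {n N : ℕ} (hn : 0 < n) (hnN : n ≤ N) (ω : Ω) :
    F (cubeN d n) ω ≤ F (cubeN d N) ω + 4 * d * A ω * (d * N ^ (d - 1)) := by
  rcases hnN.eq_or_lt with rfl | hnN
  · have := hF.Anonneg ω
    have : 0 ≤ 4 * d * A ω * (d * n ^ (d - 1)) := by positivity
    linarith
  have key : ∀ i ≤ d,
      F (cubeN d n) ω - i * (4 * d * A ω * N ^ (d - 1)) ≤ F (partialCubeN d n N i) ω := by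
    intro i hi
    induction i with
    | zero => simp [partialCubeN_zero]
    | succ i ih =>
      have := hF.sub_le_partialCubeN_succ hpos hn hnN hi ω
      push_cast
      linarith [ih (by omega)]
  have := key d le_rfl
  rw [partialCubeN_self] at this
  linarith

end AlmostSuperadditive

theorem alternate_rates_general {d : ℕ} {Ω : Type*} [MeasurableSpace Ω] (μ : Measure Ω)
    (τ : (Fin d → ℕ) → Ω → Ω) (F : Finset (Fin d → ℕ) → Ω → ℝ) (A : Ω → ℝ)
    (hF : AlmostSuperadditive μ τ F A)
    (hpos : ∀ B, IsBoxN B → ∀ ω, 0 ≤ F B ω)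
    (m : ℕ) (hm : 1 ≤ m) (ω : Ω)
    (hbd : IsBoundedUnder (· ≤ ·) atTop (fun n => F (cubeN d n) ω / (n : ℝ) ^ d)) :
    limsup (fun k => F (cubeN d (k * m)) ω / ((k * m : ℕ) : ℝ) ^ d) atTop
      = limsup (fun n => F (cubeN d n) ω / (n : ℝ) ^ d) atTop ∧
    liminf (fun k => F (cubeN d (k * m)) ω / ((k * m : ℕ) : ℝ) ^ d) atTop
      = liminf (fun n => F (cubeN d n) ω / (n : ℝ) ^ d) atTop := by
  have he : Tendsto (fun n : ℕ => 4 * d * A ω * (d * (n : ℝ) ^ (d - 1)) / (n : ℝ) ^ d) atTop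
      (𝓝 0) := by
    simpa [mul_div_assoc] using (tendsto_natCast_mul_pow_pred_div_pow d).const_mul (4 * d * A ω)
  exact limsup_comp_mul_eq_and_liminf_comp_mul_eq_of_le_add
    (fun a b ha hab => hF.le_cubeN_add hpos ha hab ω) he (fun n hn => hpos _ (isBoxN_cubeN hn) ω)
    hbd hm

/-- **Alternate rates of convergence** (Step 2): for a nonnegative almost superadditive
process and fixed `m ≥ 1`, the pointwise `limsup` and `liminf` of `|S_n|⁻¹ F_{S_n}(ω)`
agree with those of the subsequence `|S_{km}|⁻¹ F_{S_{km}}(ω)` as `k → ∞`. -/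
theorem alternate_rates {d : ℕ} {Ω : Type*} [MeasurableSpace Ω] (μ : Measure Ω)
    [IsProbabilityMeasure μ]
    (τ : (Fin d → ℕ) → Ω → Ω) (F : Finset (Fin d → ℕ) → Ω → ℝ) (A : Ω → ℝ)
    (hF : AlmostSuperadditive μ τ F A)
    (hpos : ∀ B, IsBoxN B → ∀ ω, 0 ≤ F B ω)
    (m : ℕ) (hm : 1 ≤ m) (ω : Ω)
    (hbd : IsBoundedUnder (· ≤ ·) atTop (fun n => F (cubeN d n) ω / (n : ℝ) ^ d)) :
    limsup (fun k => F (cubeN d (k * m)) ω / ((k * m : ℕ) : ℝ) ^ d) atTop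
      = limsup (fun n => F (cubeN d n) ω / (n : ℝ) ^ d) atTop ∧
    liminf (fun k => F (cubeN d (k * m)) ω / ((k * m : ℕ) : ℝ) ^ d) atTop
      = liminf (fun n => F (cubeN d n) ω / (n : ℝ) ^ d) atTop :=
  alternate_rates_general μ τ F A hF hpos m hm ω hbd
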